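/- There exists a universal constant C < ∞ such that for every δ ∈ (0, arsinh(1)) and every ℓ with 0 < ℓ ≤ 2δ, one has π/δ − C ≤ X(ℓ) − X_δ(ℓ) ≤ π²/(2δ), where X(ℓ) = (2π/ℓ)·(π/2 − arctan(sinh(ℓ/2))) and X_δ(ℓ) = (2π/ℓ)·(π/2 − arcsin(sinh(ℓ/2)/sinh(δ))). -/

import Mathlib

/-- Half-length of the hyperbolic collar around a geodesic of length `ℓ`. -/
noncomputable def collarX (ℓ : ℝ) : ℝ :=
  2 * Real.pi / ℓ * (Real.pi / 2 - Real.arctan (Real.sinh (ℓ / 2)))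

/-- Half-length of the `δ`-thin part of the hyperbolic collar. -/
noncomputable def collarXdelta (δ ℓ : ℝ) : ℝ :=
  2 * Real.pi / ℓ * (Real.pi / 2 - Real.arcsin (Real.sinh (ℓ / 2) / Real.sinh δ))

/-!
Write `t = sinh (ℓ/2)`, `s = sinh δ` and `u = t/s ∈ (0, 1]`, so that
`X(ℓ) − X_δ(ℓ) = (2π/ℓ)(arcsin u − arctan t)`.

Upper bound: `arcsin u ≤ (π/2) u` (Jordan's inequality), `arctan t ≥ 0`, and convexity of `sinh`
on `[0, ∞)` gives `u ≤ ℓ/(2δ)`.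

Lower bound: `arcsin u ≥ u` and `arctan t ≤ t`, so the difference is at least
`(2π/ℓ) t (1/s − 1) ≥ π (1/s − 1)`, using `t ≥ ℓ/2` and `s ≤ 1`. Finally `sinh δ − δ ≤ δ²` for
`δ ≤ 1`, whence `1/s ≥ 1/δ − 1` and one may take `C = 2π`.
-/

open Set

namespace Real

theorem sinh_sub_self_le_sq {x : ℝ} (hx : |x| ≤ 1) : sinh x - x ≤ x ^ 2 := by
  have hpos := abs_le.1 (abs_exp_sub_one_sub_id_le hx)
  have hneg := abs_le.1 (abs_exp_sub_one_sub_id_le (x := -x) (by rwa [abs_neg]))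
  rw [sinh_eq]
  linarith [hpos.2, hneg.1]

theorem inv_sub_one_le_inv_sinh {x : ℝ} (hx : 0 < x) (hx1 : x ≤ 1) :
    x⁻¹ - 1 ≤ (sinh x)⁻¹ := by
  have hxs : x ≤ sinh x := self_le_sinh_iff.2 hx.le
  have hsx : sinh x - x ≤ x ^ 2 := sinh_sub_self_le_sq (by rw [abs_of_pos hx]; exact hx1)
  have hs : 0 < sinh x := hx.trans_le hxs
  rw [sub_le_iff_le_add, ← sub_le_iff_le_add', inv_sub_inv hx.ne' hs.ne',
    div_le_one (by positivity)]
  nlinarith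

theorem convexOn_sinh : ConvexOn ℝ (Ici 0) sinh := by
  refine convexOn_of_deriv2_nonneg (convex_Ici 0) continuous_sinh.continuousOn
    differentiable_sinh.differentiableOn ?_ ?_
  · rw [deriv_sinh]
    exact differentiable_cosh.differentiableOn
  · intro x hx
    rw [interior_Ici, mem_Ioi] at hx
    have h2 : deriv^[2] sinh x = sinh x := by
      simp [Function.iterate_succ_apply', deriv_sinh, deriv_cosh]
    rw [h2]
    exact sinh_nonneg_iff.2 hx.le

theorem sinh_mul_le_mul_sinh {a x : ℝ} (ha0 : 0 ≤ a) (ha1 : a ≤ 1) (hx : 0 ≤ x) :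
    sinh (a * x) ≤ a * sinh x := by
  simpa using convexOn_sinh.2 (mem_Ici.2 hx) (mem_Ici.2 le_rfl) ha0 (sub_nonneg.2 ha1)
    (add_sub_cancel a 1)

theorem self_le_arcsin {x : ℝ} (h0 : 0 ≤ x) (h1 : x ≤ 1) : x ≤ arcsin x := by
  have hsin : sin (arcsin x) = x := sin_arcsin (by linarith) h1
  have := sin_le (arcsin_nonneg.2 h0)
  linarith

theorem arcsin_le_pi_div_two_mul {x : ℝ} (h0 : 0 ≤ x) (h1 : x ≤ 1) : arcsin x ≤ π / 2 * x := by
  have hπ := pi_pos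
  calc arcsin x ≤ arcsin (sin (π / 2 * x)) := arcsin_le_arcsin (le_sin_mul h0 h1)
    _ = π / 2 * x := arcsin_sin (by nlinarith) (by nlinarith)

theorem arctan_le_self {x : ℝ} (hx : 0 ≤ x) : arctan x ≤ x := by
  simpa [tan_arctan] using le_tan (arctan_nonneg.2 hx) (arctan_lt_pi_div_two x)

end Real

open Real

theorem collarX_sub_collarXdelta_eq (δ ℓ : ℝ) :
    collarX ℓ - collarXdelta δ ℓ
      = 2 * π / ℓ * (arcsin (sinh (ℓ / 2) / sinh δ) - arctan (sinh (ℓ / 2))) := by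
  rw [collarX, collarXdelta]
  ring

theorem sinh_half_div_sinh_mem_Icc {δ ℓ : ℝ} (hℓ : 0 < ℓ) (hℓδ : ℓ ≤ 2 * δ) :
    sinh (ℓ / 2) / sinh δ ∈ Icc 0 1 := by
  have hs : 0 < sinh δ := sinh_pos_iff.2 (by linarith)
  exact ⟨div_nonneg (sinh_nonneg_iff.2 (by linarith)) hs.le,
    (div_le_one hs).2 (sinh_le_sinh.2 (by linarith))⟩

theorem collarX_sub_collarXdelta_le {δ ℓ : ℝ} (hℓ : 0 < ℓ) (hℓδ : ℓ ≤ 2 * δ) :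
    collarX ℓ - collarXdelta δ ℓ ≤ π ^ 2 / (2 * δ) := by
  have hδ : 0 < δ := by linarith
  have hs : 0 < sinh δ := sinh_pos_iff.2 hδ
  obtain ⟨hu0, hu1⟩ := sinh_half_div_sinh_mem_Icc hℓ hℓδ
  have hu : sinh (ℓ / 2) / sinh δ ≤ ℓ / (2 * δ) := by
    rw [div_le_iff₀ hs]
    calc sinh (ℓ / 2) = sinh (ℓ / (2 * δ) * δ) := by field_simp
      _ ≤ ℓ / (2 * δ) * sinh δ :=
        sinh_mul_le_mul_sinh (by positivity) ((div_le_one (by linarith)).2 hℓδ) hδ.le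
  have harctan : 0 ≤ arctan (sinh (ℓ / 2)) := arctan_nonneg.2 (sinh_nonneg_iff.2 (by linarith))
  rw [collarX_sub_collarXdelta_eq]
  calc 2 * π / ℓ * (arcsin (sinh (ℓ / 2) / sinh δ) - arctan (sinh (ℓ / 2)))
      ≤ 2 * π / ℓ * (π / 2 * (ℓ / (2 * δ))) := by
        gcongr
        have := arcsin_le_pi_div_two_mul hu0 hu1
        have : π / 2 * (sinh (ℓ / 2) / sinh δ) ≤ π / 2 * (ℓ / (2 * δ)) := by gcongr
        linarith
    _ = π ^ 2 / (2 * δ) := by field_simp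

theorem pi_div_sub_two_pi_le_collarX_sub_collarXdelta {δ ℓ : ℝ} (hδ1 : sinh δ ≤ 1)
    (hℓ : 0 < ℓ) (hℓδ : ℓ ≤ 2 * δ) :
    π / δ - 2 * π ≤ collarX ℓ - collarXdelta δ ℓ := by
  have hδ : 0 < δ := by linarith
  have hs : 0 < sinh δ := sinh_pos_iff.2 hδ
  obtain ⟨hu0, hu1⟩ := sinh_half_div_sinh_mem_Icc hℓ hℓδ
  have ht : ℓ / 2 ≤ sinh (ℓ / 2) := self_le_sinh_iff.2 (by linarith)
  have hinv : δ⁻¹ - 1 ≤ (sinh δ)⁻¹ :=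
    inv_sub_one_le_inv_sinh hδ ((self_le_sinh_iff.2 hδ.le).trans hδ1)
  have hinv1 : 0 ≤ (sinh δ)⁻¹ - 1 := sub_nonneg.2 (one_le_inv₀ hs |>.2 hδ1)
  rw [collarX_sub_collarXdelta_eq]
  calc π / δ - 2 * π = π * ((δ⁻¹ - 1) - 1) := by ring
    _ ≤ π * ((sinh δ)⁻¹ - 1) := by gcongr
    _ = 2 * π / ℓ * (ℓ / 2 * ((sinh δ)⁻¹ - 1)) := by field_simp
    _ ≤ 2 * π / ℓ * (sinh (ℓ / 2) * ((sinh δ)⁻¹ - 1)) := by gcongr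
    _ = 2 * π / ℓ * (sinh (ℓ / 2) / sinh δ - sinh (ℓ / 2)) := by ring
    _ ≤ 2 * π / ℓ * (arcsin (sinh (ℓ / 2) / sinh δ) - arctan (sinh (ℓ / 2))) := by
        gcongr
        · exact self_le_arcsin hu0 hu1
        · exact arctan_le_self (by linarith)

theorem collarX_sub_collarXdelta_bounds :
    ∃ C : ℝ, ∀ δ : ℝ, 0 < δ → δ < Real.arsinh 1 → ∀ ℓ : ℝ, 0 < ℓ → ℓ ≤ 2 * δ →
      Real.pi / δ - C ≤ collarX ℓ - collarXdelta δ ℓ ∧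
      collarX ℓ - collarXdelta δ ℓ ≤ Real.pi ^ 2 / (2 * δ) := by
  refine ⟨2 * π, fun δ _ hδ1 ℓ hℓ hℓδ => ⟨?_, collarX_sub_collarXdelta_le hℓ hℓδ⟩⟩
  have hsinh : sinh δ ≤ 1 := by simpa using sinh_le_sinh.2 hδ1.le
  exact pi_div_sub_two_pi_le_collarX_sub_collarXdelta hsinh hℓ hℓδ
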